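/- arXiv:1805.10384 — 2 statements merged into one kernel-verified Lean document; each statement's English description precedes it below -/
import Mathlib

section
/- Let X_i, X_j, X_k be random vectors where X_i, X_j are i.i.d. with mean z_o = z_p, X_k is independent of X_i with mean z_q, and M is PSD. Then E[D_M^2(X_i, X_k)] − E[D_M^2(X_i, X_j)] ≥ D_M^2(z_o, z_q) − D_M^2(z_o, z_p) − E[D_M^2(X_i, z_o)]. Consequently, if D_M^2(z_o, z_q) − D_M^2(z_o, z_p) ≥ 1 + E[D_M^2(X_i, z_o)], then E[D_M^2(X_i, X_k)] − E[D_M^2(X_i, X_j)] ≥ 1. -/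
/-!
Writing `Xi - Xk = (Xi - zo) - (Xk - zq) + (zo - zq)`, independence of `Xi` and `Xk` kills
every cross term in the expansion of the quadratic form, so
`E D²(Xi, Xk) = E D²(Xi, zo) + E D²(Xk, zq) + D²(zo, zq)`; in the same way
`E D²(Xi, Xj) = 2 E D²(Xi, zo)`, as `Xj` is distributed like `Xi`. The bound follows from
`E D²(Xk, zq) ≥ 0` (as `M` is positive semidefinite) and `D²(zo, zp) = 0`.
-/

open Matrix MeasureTheory ProbabilityTheory

section

variable {n Ω : Type*} [MeasurableSpace Ω] {μ : Measure Ω} {U V : Ω → n → ℝ}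

lemma ProbabilityTheory.IndepFun.coord (hUV : IndepFun U V μ) (i j : n) :
    IndepFun (fun ω => U ω i) (fun ω => V ω j) μ :=
  hUV.comp (measurable_pi_apply i) (measurable_pi_apply j)

lemma integral_sub_apply_eq_zero [IsProbabilityMeasure μ] {X : Ω → n → ℝ} {m : n → ℝ}
    (hX : ∀ i, Integrable (fun ω => X ω i) μ) (hm : ∀ i, ∫ ω, X ω i ∂μ = m i) (i : n) :
    ∫ ω, X ω i - m i ∂μ = 0 := by
  simp [integral_sub (hX i) (integrable_const _), hm]

variable [Fintype n]

lemma dotProduct_mulVec_eq_sum_mul (u v : n → ℝ) (M : Matrix n n ℝ) :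
    u ⬝ᵥ M *ᵥ v = ∑ i, ∑ j, M i j * (u i * v j) := by
  simp only [dotProduct, mulVec, Finset.mul_sum]
  exact Finset.sum_congr rfl fun i _ => Finset.sum_congr rfl fun j _ => by ring

lemma integrable_dotProduct_mulVec_of_indepFun (hUV : IndepFun U V μ)
    (hU : ∀ i, Integrable (fun ω => U ω i) μ) (hV : ∀ j, Integrable (fun ω => V ω j) μ)
    (M : Matrix n n ℝ) : Integrable (fun ω => U ω ⬝ᵥ M *ᵥ V ω) μ := by
  simp only [dotProduct_mulVec_eq_sum_mul]
  exact integrable_finsetSum _ fun i _ => integrable_finsetSum _ fun j _ =>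
    ((hUV.coord i j).integrable_mul (hU i) (hV j)).const_mul _

lemma integral_dotProduct_mulVec_of_indepFun (hUV : IndepFun U V μ)
    (hU : ∀ i, Integrable (fun ω => U ω i) μ) (hV : ∀ j, Integrable (fun ω => V ω j) μ)
    (M : Matrix n n ℝ) :
    ∫ ω, U ω ⬝ᵥ M *ᵥ V ω ∂μ
      = (fun i => ∫ ω, U ω i ∂μ) ⬝ᵥ M *ᵥ (fun j => ∫ ω, V ω j ∂μ) := by
  have hUV' i j : Integrable (fun ω => U ω i * V ω j) μ :=
    (hUV.coord i j).integrable_mul (hU i) (hV j)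
  simp only [dotProduct_mulVec_eq_sum_mul]
  rw [integral_finsetSum (f := fun i ω => ∑ j, M i j * (U ω i * V ω j)) _
    fun i _ => integrable_finsetSum _ fun j _ => (hUV' i j).const_mul _]
  refine Finset.sum_congr rfl fun i _ => ?_
  rw [integral_finsetSum (f := fun j ω => M i j * (U ω i * V ω j)) _
    fun j _ => (hUV' i j).const_mul _]
  refine Finset.sum_congr rfl fun j _ => ?_
  rw [integral_const_mul, (hUV.coord i j).integral_fun_mul_eq_mul_integral
    (hU i).aestronglyMeasurable (hV j).aestronglyMeasurable]

lemma sub_dotProduct_mulVec_sub (u v : n → ℝ) (M : Matrix n n ℝ) :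
    (u - v) ⬝ᵥ M *ᵥ (u - v) = u ⬝ᵥ M *ᵥ u + v ⬝ᵥ M *ᵥ v - u ⬝ᵥ M *ᵥ v - v ⬝ᵥ M *ᵥ u := by
  simp only [mulVec_sub, dotProduct_sub, sub_dotProduct]
  ring

lemma integrable_sub_dotProduct_mulVec_sub_of_indepFun (hUV : IndepFun U V μ)
    (hU : ∀ i, Integrable (fun ω => U ω i) μ) (hV : ∀ j, Integrable (fun ω => V ω j) μ)
    (M : Matrix n n ℝ) (hQU : Integrable (fun ω => U ω ⬝ᵥ M *ᵥ U ω) μ)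
    (hQV : Integrable (fun ω => V ω ⬝ᵥ M *ᵥ V ω) μ) :
    Integrable (fun ω => (U ω - V ω) ⬝ᵥ M *ᵥ (U ω - V ω)) μ := by
  simp only [sub_dotProduct_mulVec_sub]
  exact ((hQU.add hQV).sub (integrable_dotProduct_mulVec_of_indepFun hUV hU hV M)).sub
    (integrable_dotProduct_mulVec_of_indepFun hUV.symm hV hU M)

lemma integral_sub_dotProduct_mulVec_sub_of_indepFun (hUV : IndepFun U V μ)
    (hU : ∀ i, Integrable (fun ω => U ω i) μ) (hV : ∀ j, Integrable (fun ω => V ω j) μ)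
    (hU₀ : ∀ i, ∫ ω, U ω i ∂μ = 0)
    (M : Matrix n n ℝ) (hQU : Integrable (fun ω => U ω ⬝ᵥ M *ᵥ U ω) μ)
    (hQV : Integrable (fun ω => V ω ⬝ᵥ M *ᵥ V ω) μ) :
    ∫ ω, (U ω - V ω) ⬝ᵥ M *ᵥ (U ω - V ω) ∂μ
      = ∫ ω, U ω ⬝ᵥ M *ᵥ U ω ∂μ + ∫ ω, V ω ⬝ᵥ M *ᵥ V ω ∂μ := by
  have hUV' := integrable_dotProduct_mulVec_of_indepFun hUV hU hV M
  have hVU' := integrable_dotProduct_mulVec_of_indepFun hUV.symm hV hU M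
  simp only [sub_dotProduct_mulVec_sub]
  rw [integral_sub ?_ hVU', integral_sub ?_ hUV', integral_add hQU hQV,
    integral_dotProduct_mulVec_of_indepFun hUV hU hV,
    integral_dotProduct_mulVec_of_indepFun hUV.symm hV hU,
    show (fun i => ∫ ω, U ω i ∂μ) = 0 from funext hU₀]
  · simp
  · exact hQU.add hQV
  · exact (hQU.add hQV).sub hUV'

variable [IsProbabilityMeasure μ]

theorem integral_sub_dotProduct_mulVec_sub_eq_of_indepFun {X Y : Ω → n → ℝ} {mX mY : n → ℝ}
    (hXY : IndepFun X Y μ)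
    (hX : ∀ i, Integrable (fun ω => X ω i) μ) (hY : ∀ j, Integrable (fun ω => Y ω j) μ)
    (hmX : ∀ i, ∫ ω, X ω i ∂μ = mX i) (hmY : ∀ j, ∫ ω, Y ω j ∂μ = mY j) (M : Matrix n n ℝ)
    (hQX : Integrable (fun ω => (X ω - mX) ⬝ᵥ M *ᵥ (X ω - mX)) μ)
    (hQY : Integrable (fun ω => (Y ω - mY) ⬝ᵥ M *ᵥ (Y ω - mY)) μ) :
    ∫ ω, (X ω - Y ω) ⬝ᵥ M *ᵥ (X ω - Y ω) ∂μ
      = ∫ ω, (X ω - mX) ⬝ᵥ M *ᵥ (X ω - mX) ∂μ + ∫ ω, (Y ω - mY) ⬝ᵥ M *ᵥ (Y ω - mY) ∂μ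
        + (mX - mY) ⬝ᵥ M *ᵥ (mX - mY) := by
  have hcX i : Integrable (fun ω => X ω i - mX i) μ := (hX i).sub (integrable_const _)
  have hcY i : Integrable (fun ω => Y ω i - mY i) μ := (hY i).sub (integrable_const _)
  have hc : IndepFun (fun ω => X ω - mX) (fun ω => Y ω - mY) μ :=
    hXY.comp (measurable_sub_const mX) (measurable_sub_const mY)
  have hdiff i : ∫ ω, ((X ω - mX) - (Y ω - mY)) i ∂μ = 0 := by
    simp only [Pi.sub_apply]
    rw [integral_sub (hcX i) (hcY i), integral_sub_apply_eq_zero hX hmX,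
      integral_sub_apply_eq_zero hY hmY, sub_zero]
  calc ∫ ω, (X ω - Y ω) ⬝ᵥ M *ᵥ (X ω - Y ω) ∂μ
      = ∫ ω, ((X ω - mX) - (Y ω - mY) - (mY - mX)) ⬝ᵥ M *ᵥ
          ((X ω - mX) - (Y ω - mY) - (mY - mX)) ∂μ := by
        congr with ω; abel_nf
    _ = ∫ ω, ((X ω - mX) - (Y ω - mY)) ⬝ᵥ M *ᵥ ((X ω - mX) - (Y ω - mY)) ∂μ
          + (mY - mX) ⬝ᵥ M *ᵥ (mY - mX) := by
        -- a constant random vector is independent of everything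
        rw [integral_sub_dotProduct_mulVec_sub_of_indepFun
          (U := fun ω => (X ω - mX) - (Y ω - mY)) (indepFun_const_right _ _)
          (fun i => (hcX i).sub (hcY i)) (fun _ => integrable_const _) hdiff M
          (integrable_sub_dotProduct_mulVec_sub_of_indepFun hc hcX hcY M hQX hQY)
          (integrable_const _), integral_const]
        simp
    _ = _ := by
        rw [integral_sub_dotProduct_mulVec_sub_of_indepFun hc hcX hcY
          (integral_sub_apply_eq_zero hX hmX) M hQX hQY, ← neg_sub mX mY, mulVec_neg,
          neg_dotProduct, dotProduct_neg, neg_neg]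

end

theorem expected_triplet_margin_bound_general {d : ℕ} {Ω : Type*} [MeasurableSpace Ω]
    (μ : Measure Ω) [IsProbabilityMeasure μ]
    (M : Matrix (Fin d) (Fin d) ℝ) (hM : M.PosSemidef)
    (Xi Xj Xk : Ω → Fin d → ℝ) (zo zp zq : Fin d → ℝ)
    (hindepij : IndepFun Xi Xj μ)
    (hidentij : IdentDistrib Xi Xj μ μ)
    (hzp : zp = zo)
    (hindepik : IndepFun Xi Xk μ)
    (hXi : ∀ i, Integrable (fun ω => Xi ω i) μ)
    (hXk : ∀ i, Integrable (fun ω => Xk ω i) μ)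
    (hmeani : ∀ i, ∫ ω, Xi ω i ∂μ = zo i)
    (hmeank : ∀ i, ∫ ω, Xk ω i ∂μ = zq i)
    (hIi : Integrable (fun ω => (Xi ω - zo) ⬝ᵥ M *ᵥ (Xi ω - zo)) μ)
    (hIk : Integrable (fun ω => (Xk ω - zq) ⬝ᵥ M *ᵥ (Xk ω - zq)) μ) :
    (∫ ω, (Xi ω - Xk ω) ⬝ᵥ M *ᵥ (Xi ω - Xk ω) ∂μ
        - ∫ ω, (Xi ω - Xj ω) ⬝ᵥ M *ᵥ (Xi ω - Xj ω) ∂μ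
      ≥ (zo - zq) ⬝ᵥ M *ᵥ (zo - zq) - (zo - zp) ⬝ᵥ M *ᵥ (zo - zp)
        - ∫ ω, (Xi ω - zo) ⬝ᵥ M *ᵥ (Xi ω - zo) ∂μ)
    ∧ ((zo - zq) ⬝ᵥ M *ᵥ (zo - zq) - (zo - zp) ⬝ᵥ M *ᵥ (zo - zp)
        ≥ 1 + ∫ ω, (Xi ω - zo) ⬝ᵥ M *ᵥ (Xi ω - zo) ∂μ →
      ∫ ω, (Xi ω - Xk ω) ⬝ᵥ M *ᵥ (Xi ω - Xk ω) ∂μ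
        - ∫ ω, (Xi ω - Xj ω) ⬝ᵥ M *ᵥ (Xi ω - Xj ω) ∂μ ≥ 1) := by
  have hQ : Measurable fun v : Fin d → ℝ => (v - zo) ⬝ᵥ M *ᵥ (v - zo) := by fun_prop
  have hXj i : Integrable (fun ω => Xj ω i) μ :=
    (hidentij.comp (measurable_pi_apply i)).integrable_iff.1 (hXi i)
  have hmeanj i : ∫ ω, Xj ω i ∂μ = zo i :=
    (hidentij.comp (measurable_pi_apply i)).integral_eq ▸ hmeani i
  have hIj := (hidentij.comp hQ).integrable_iff.1 hIi
  have hEj : ∫ ω, (Xj ω - zo) ⬝ᵥ M *ᵥ (Xj ω - zo) ∂μ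
      = ∫ ω, (Xi ω - zo) ⬝ᵥ M *ᵥ (Xi ω - zo) ∂μ :=
    (hidentij.comp hQ).integral_eq.symm
  have hEij := integral_sub_dotProduct_mulVec_sub_eq_of_indepFun hindepij hXi hXj hmeani
    hmeanj M hIi hIj
  have hEik := integral_sub_dotProduct_mulVec_sub_eq_of_indepFun hindepik hXi hXk hmeani
    hmeank M hIi hIk
  have hEk : 0 ≤ ∫ ω, (Xk ω - zq) ⬝ᵥ M *ᵥ (Xk ω - zq) ∂μ :=
    integral_nonneg fun ω => hM.dotProduct_mulVec_nonneg _
  subst hzp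
  simp only [sub_self, mulVec_zero, dotProduct_zero] at hEij ⊢
  constructor
  · linarith
  · intro h; linarith

/-- Margin lower bound for the original triplet in terms of the latent triplet,
and the resulting expected margin constraint. -/
theorem expected_triplet_margin_bound {d : ℕ} {Ω : Type*} [MeasurableSpace Ω]
    (μ : Measure Ω) [IsProbabilityMeasure μ]
    (M : Matrix (Fin d) (Fin d) ℝ) (hM : M.PosSemidef)
    (Xi Xj Xk : Ω → Fin d → ℝ) (zo zp zq : Fin d → ℝ)
    (hmeasi : Measurable Xi) (hmeasj : Measurable Xj) (hmeask : Measurable Xk)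
    (hindepij : IndepFun Xi Xj μ)
    (hidentij : IdentDistrib Xi Xj μ μ)
    (hzp : zp = zo)
    (hindepik : IndepFun Xi Xk μ)
    (hXi : ∀ i, Integrable (fun ω => Xi ω i) μ)
    (hXk : ∀ i, Integrable (fun ω => Xk ω i) μ)
    (hmeani : ∀ i, ∫ ω, Xi ω i ∂μ = zo i)
    (hmeank : ∀ i, ∫ ω, Xk ω i ∂μ = zq i)
    (hIij : Integrable (fun ω => (Xi ω - Xj ω) ⬝ᵥ M *ᵥ (Xi ω - Xj ω)) μ)
    (hIik : Integrable (fun ω => (Xi ω - Xk ω) ⬝ᵥ M *ᵥ (Xi ω - Xk ω)) μ)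
    (hIi : Integrable (fun ω => (Xi ω - zo) ⬝ᵥ M *ᵥ (Xi ω - zo)) μ)
    (hIk : Integrable (fun ω => (Xk ω - zq) ⬝ᵥ M *ᵥ (Xk ω - zq)) μ) :
    (∫ ω, (Xi ω - Xk ω) ⬝ᵥ M *ᵥ (Xi ω - Xk ω) ∂μ
        - ∫ ω, (Xi ω - Xj ω) ⬝ᵥ M *ᵥ (Xi ω - Xj ω) ∂μ
      ≥ (zo - zq) ⬝ᵥ M *ᵥ (zo - zq) - (zo - zp) ⬝ᵥ M *ᵥ (zo - zp)
        - ∫ ω, (Xi ω - zo) ⬝ᵥ M *ᵥ (Xi ω - zo) ∂μ)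
    ∧ ((zo - zq) ⬝ᵥ M *ᵥ (zo - zq) - (zo - zp) ⬝ᵥ M *ᵥ (zo - zp)
        ≥ 1 + ∫ ω, (Xi ω - zo) ⬝ᵥ M *ᵥ (Xi ω - zo) ∂μ →
      ∫ ω, (Xi ω - Xk ω) ⬝ᵥ M *ᵥ (Xi ω - Xk ω) ∂μ
        - ∫ ω, (Xi ω - Xj ω) ⬝ᵥ M *ᵥ (Xi ω - Xj ω) ∂μ ≥ 1) :=
  expected_triplet_margin_bound_general μ M hM Xi Xj Xk zo zp zq hindepij hidentij hzp hindepik hXi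
    hXk hmeani hmeank hIi hIk
end

section
/- Let M be PSD and suppose D_M(z_o', z_q') ≤ c/2 for a constant c ≥ 0. Then for any z_o, z_q: D_M^2(z_o, z_q) ≥ D_M^2(z_o', z_q') − c·D_M(z_o, z_o') − c·D_M(z_q, z_q') + (D_M(z_o,z_o') − D_M(z_q,z_q'))^2. In particular, if additionally D_M(z_o,z_o') ≥ 1 and D_M(z_q,z_q') ≥ 1, then D_M^2(z_o,z_q) ≥ D_M^2(z_o',z_q') − c·D_M^2(z_o,z_o') − c·D_M^2(z_q,z_q'). -/
/-!
Writing `M = Bᵀ B` (with `B = √M`) exhibits `D_M` as the Euclidean distance between the images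
under `B`, so only the pseudometric axioms matter. With `t = D(z_o, z_q)`, `e = D(z_o', z_q')`,
`a = D(z_o, z_o')`, `b = D(z_q, z_q')`, the triangle inequality gives `e ≤ t + a + b` and
`|a - b| ≤ t + e`. These two lower bounds on `t` yield `t² ≥ e² - 2e(a + b) + (a - b)²`, and
`c ≥ 2e` finishes the first bound; for `a, b ≥ 1` the second follows from `a ≤ a²`, `b ≤ b²`.
-/

open Matrix

noncomputable def DM {d : ℕ} (M : Matrix (Fin d) (Fin d) ℝ) (u v : Fin d → ℝ) : ℝ :=
  Real.sqrt ((u - v) ⬝ᵥ M *ᵥ (u - v))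

open scoped MatrixOrder

theorem Matrix.dotProduct_transpose_mul_self_mulVec {m n : Type*} [Fintype m] [Fintype n]
    (B : Matrix m n ℝ) (x : n → ℝ) :
    x ⬝ᵥ (Bᵀ * B) *ᵥ x = B *ᵥ x ⬝ᵥ B *ᵥ x := by
  rw [← mulVec_mulVec, dotProduct_mulVec, vecMul_transpose]

theorem Matrix.PosSemidef.exists_eq_transpose_mul_self {n : Type*} [Fintype n] [DecidableEq n]
    {M : Matrix n n ℝ} (hM : M.PosSemidef) : ∃ B : Matrix n n ℝ, M = Bᵀ * B := by
  refine ⟨CFC.sqrt M, ?_⟩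
  have hsymm : star (CFC.sqrt M) = CFC.sqrt M :=
    (IsSelfAdjoint.of_nonneg (CFC.sqrt_nonneg M)).star_eq
  rw [star_eq_conjTranspose, conjTranspose_eq_transpose_of_trivial] at hsymm
  rw [hsymm, CFC.sqrt_mul_sqrt_self M hM.nonneg]

theorem exists_DM_eq_dist {d : ℕ} {M : Matrix (Fin d) (Fin d) ℝ} (hM : M.PosSemidef) :
    ∃ f : (Fin d → ℝ) → EuclideanSpace ℝ (Fin d), ∀ u v, DM M u v = dist (f u) (f v) := by
  obtain ⟨B, rfl⟩ := hM.exists_eq_transpose_mul_self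
  refine ⟨fun u ↦ WithLp.toLp 2 (B *ᵥ u), fun u v ↦ ?_⟩
  rw [DM, dotProduct_transpose_mul_self_mulVec, EuclideanSpace.dist_eq, mulVec_sub]
  simp only [dotProduct, Pi.sub_apply, Real.dist_eq, sq, abs_mul_abs_self]

theorem sq_sub_two_mul_add_sq_le {a b e t : ℝ} (ha : 0 ≤ a) (hb : 0 ≤ b) (he : 0 ≤ e)
    (hea : e ≤ t + (a + b)) (hab : |a - b| ≤ t + e) :
    e ^ 2 - 2 * e * (a + b) + (a - b) ^ 2 ≤ t ^ 2 := by
  have habs : |a - b| ≤ a + b := abs_sub_le_iff.2 ⟨by linarith, by linarith⟩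
  rcases le_total e |a - b| with h | h
  · have : (|a - b| - e) ^ 2 ≤ t ^ 2 := pow_le_pow_left₀ (by linarith) (by linarith) 2
    nlinarith [sq_abs (a - b), mul_nonneg he (sub_nonneg.2 habs)]
  rcases le_total (a + b) e with h' | h'
  · have : (e - (a + b)) ^ 2 ≤ t ^ 2 := pow_le_pow_left₀ (by linarith) (by linarith) 2
    nlinarith [mul_nonneg ha hb]
  · -- the left side is convex in `e` and nonpositive at both `e = |a - b|` and `e = a + b`
    nlinarith [sq_abs (a - b), mul_nonneg (sub_nonneg.2 habs) (abs_nonneg (a - b)),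
      mul_nonneg (sub_nonneg.2 h) (sub_nonneg.2 h'), sq_nonneg t]

section PseudoMetricSpace

variable {X : Type*} [PseudoMetricSpace X] {c : ℝ} {x y x' y' : X}

theorem dist_sq_ge_of_two_mul_dist_le (h : 2 * dist x' y' ≤ c) :
    dist x' y' ^ 2 - c * dist x x' - c * dist y y' + (dist x x' - dist y y') ^ 2
      ≤ dist x y ^ 2 := by
  have hea : dist x' y' ≤ dist x y + (dist x x' + dist y y') := by
    linarith [dist_triangle4 x' x y y', dist_comm x x']
  have hab : |dist x x' - dist y y'| ≤ dist x y + dist x' y' := by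
    simpa only [Real.dist_eq] using dist_dist_dist_le x x' y y'
  have := sq_sub_two_mul_add_sq_le dist_nonneg dist_nonneg dist_nonneg hea hab
  nlinarith [mul_nonneg (sub_nonneg.2 h) (add_nonneg (dist_nonneg (x := x) (y := x'))
    (dist_nonneg (x := y) (y := y')))]

theorem dist_sq_ge_of_two_mul_dist_le_of_one_le (h : 2 * dist x' y' ≤ c) (hx : 1 ≤ dist x x')
    (hy : 1 ≤ dist y y') :
    dist x' y' ^ 2 - c * dist x x' ^ 2 - c * dist y y' ^ 2 ≤ dist x y ^ 2 := by
  have hc : 0 ≤ c := by linarith [dist_nonneg (x := x') (y := y')]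
  have := dist_sq_ge_of_two_mul_dist_le (x := x) (y := y) h
  linarith [mul_le_mul_of_nonneg_left (le_self_pow₀ hx two_ne_zero) hc,
    mul_le_mul_of_nonneg_left (le_self_pow₀ hy two_ne_zero) hc, sq_nonneg (dist x x' - dist y y')]

end PseudoMetricSpace

theorem quadform_dissimilar_lower_bound_general {d : ℕ} (M : Matrix (Fin d) (Fin d) ℝ)
    (hM : M.PosSemidef) (c : ℝ) (zo' zq' : Fin d → ℝ)
    (hbound : DM M zo' zq' ≤ c / 2) :
    ∀ zo zq : Fin d → ℝ,
      (DM M zo zq ^ 2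
          ≥ DM M zo' zq' ^ 2 - c * DM M zo zo' - c * DM M zq zq'
            + (DM M zo zo' - DM M zq zq') ^ 2)
      ∧ (1 ≤ DM M zo zo' → 1 ≤ DM M zq zq' →
          DM M zo zq ^ 2
            ≥ DM M zo' zq' ^ 2 - c * DM M zo zo' ^ 2 - c * DM M zq zq' ^ 2) := by
  obtain ⟨f, hf⟩ := exists_DM_eq_dist hM
  have h : 2 * dist (f zo') (f zq') ≤ c := by rw [hf] at hbound; linarith
  intro zo zq
  simp only [hf, ge_iff_le]
  exact ⟨dist_sq_ge_of_two_mul_dist_le h, dist_sq_ge_of_two_mul_dist_le_of_one_le h⟩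

/-- Lower bound on the latent dissimilar distance with a bounded reference pair,
and the simplified squared-distance bound when the displacements are large. -/
theorem quadform_dissimilar_lower_bound {d : ℕ} (M : Matrix (Fin d) (Fin d) ℝ)
    (hM : M.PosSemidef) (c : ℝ) (hc : 0 ≤ c) (zo' zq' : Fin d → ℝ)
    (hbound : DM M zo' zq' ≤ c / 2) :
    ∀ zo zq : Fin d → ℝ,
      (DM M zo zq ^ 2
          ≥ DM M zo' zq' ^ 2 - c * DM M zo zo' - c * DM M zq zq'
            + (DM M zo zo' - DM M zq zq') ^ 2)
      ∧ (1 ≤ DM M zo zo' → 1 ≤ DM M zq zq' →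
          DM M zo zq ^ 2
            ≥ DM M zo' zq' ^ 2 - c * DM M zo zo' ^ 2 - c * DM M zq zq' ^ 2) :=
  quadform_dissimilar_lower_bound_general M hM c zo' zq' hbound
end
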